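/- Under the hypotheses of the whitening perturbation lemma (ε̃ := ||Â − A||_op/σ_k(A) < 1/3, Ŵ whitens Â, W = Ŵ U D^{−1/2} U^T whitens A), the whitening matrices satisfy ||Ŵ − W||_op ≤ ||W||_op · ε̃/(1 − ε̃). -/

import Mathlib

open Matrix

/-- The ℓ²→ℓ² operator norm (spectral norm) of a real rectangular matrix. -/
noncomputable def opNorm {m n : ℕ} (A : Matrix (Fin m) (Fin n) ℝ) : ℝ :=
  ‖LinearMap.toContinuousLinearMap
      (Matrix.toLin (EuclideanSpace.basisFun (Fin n) ℝ).toBasis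
        (EuclideanSpace.basisFun (Fin m) ℝ).toBasis A)‖

/-- Eigenvalues of a real matrix (junk value `0` if not symmetric). -/
noncomputable def eigVals {d : ℕ} (A : Matrix (Fin d) (Fin d) ℝ) : Fin d → ℝ :=
  if h : A.IsHermitian then h.eigenvalues else 0

/-- `sval A j` is the `(j+1)`-th largest eigenvalue of the symmetric matrix `A`;
for a positive semidefinite matrix this is the `(j+1)`-th largest singular value. -/
noncomputable def sval {d : ℕ} (A : Matrix (Fin d) (Fin d) ℝ) (j : Fin d) : ℝ :=
  (eigVals A ∘ Tuple.sort (eigVals A)) j.rev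

/-! Weyl's inequality gives `σ_k(Â) ≥ (1 - ε̃) σ_k(A)`, hence `‖Ŵ‖² ≤ 1 / ((1 - ε̃) σ_k(A))`.
Since `U (D - I) Uᵀ = Ŵᵀ (A - Â) Ŵ`, this bounds `‖D - I‖` by `ε̃ / (1 - ε̃) < 1`; in particular
`D > 0`, and `Ŵ - W = W · U (D^{1/2} - I) Uᵀ` with `‖D^{1/2} - I‖ ≤ ‖D - I‖`
because `|√x - 1| ≤ |x - 1|`. -/

open Module Submodule

open scoped Matrix.Norms.L2Operator RealInnerProductSpace

lemma Real.abs_sqrt_sub_one_le {x : ℝ} (hx : 0 ≤ x) : |√x - 1| ≤ |x - 1| := by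
  have h : x - 1 = (√x - 1) * (√x + 1) := by
    nth_rewrite 1 [← sq_sqrt hx]; ring
  rw [h, abs_mul]
  exact le_mul_of_one_le_right (abs_nonneg _) (by
    rw [abs_of_pos (by positivity)]; linarith [sqrt_nonneg x])

lemma pi_norm_sqrt_sub_one_le {n : Type*} [Fintype n] {v : n → ℝ} (hv : ∀ i, 0 ≤ v i) :
    ‖fun i => √(v i) - 1‖ ≤ ‖v - 1‖ :=
  (pi_norm_le_iff_of_nonneg (norm_nonneg _)).2 fun i =>
    (Real.abs_sqrt_sub_one_le (hv i)).trans (norm_le_pi_norm (v - 1) i)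

lemma pos_of_norm_sub_one_lt_one {n : Type*} [Fintype n] {v : n → ℝ} (h : ‖v - 1‖ < 1) (i : n) :
    0 < v i := by
  have := (norm_le_pi_norm (v - 1) i).trans_lt h
  rw [Pi.sub_apply, Pi.one_apply, Real.norm_eq_abs, abs_lt] at this
  linarith

namespace Matrix

variable {m n : Type*} [Fintype n] [DecidableEq n]

lemma l2_opNorm_transpose [Fintype m] [DecidableEq m] (A : Matrix m n ℝ) : ‖Aᵀ‖ = ‖A‖ := by
  rw [← conjTranspose_eq_transpose_of_trivial, l2_opNorm_conjTranspose]

lemma l2_opNorm_diagonal_sub_one (v : n → ℝ) : ‖diagonal v - 1‖ = ‖v - 1‖ := by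
  have : diagonal v - 1 = diagonal (v - 1) := by rw [← diagonal_one, diagonal_sub]; rfl
  rw [this, l2_opNorm_diagonal]

lemma l2_opNorm_conj_orthogonal {U : Matrix n n ℝ} (hU : Uᵀ * U = 1) (M : Matrix n n ℝ) :
    ‖U * M * Uᵀ‖ = ‖M‖ := by
  have hstar : star U = Uᵀ := conjTranspose_eq_transpose_of_trivial U
  have hU' : U ∈ unitaryGroup n ℝ := mem_unitaryGroup_iff'.2 (hstar ▸ hU)
  rw [← hstar, CStarRing.norm_mul_mem_unitary _ (Unitary.star_mem hU'),
    CStarRing.norm_mem_unitary_mul _ hU']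

lemma l2_opNorm_transpose_mul_mul_le [Fintype m] [DecidableEq m] (X : Matrix m n ℝ)
    (M : Matrix m m ℝ) :
    ‖Xᵀ * M * X‖ ≤ ‖X‖ ^ 2 * ‖M‖ := calc
  ‖Xᵀ * M * X‖ ≤ ‖Xᵀ‖ * ‖M‖ * ‖X‖ :=
    (l2_opNorm_mul _ _).trans (mul_le_mul_of_nonneg_right (l2_opNorm_mul _ _) (norm_nonneg _))
  _ = ‖X‖ ^ 2 * ‖M‖ := by rw [l2_opNorm_transpose]; ring

lemma sub_mul_conj_diagonal_inv {α : Type*} [Field α] (X : Matrix m n α) {U : Matrix n n α}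
    (hU : Uᵀ * U = 1) {v : n → α} (hv : ∀ i, v i ≠ 0) :
    X - X * U * diagonal v⁻¹ * Uᵀ = X * U * diagonal v⁻¹ * Uᵀ * (U * diagonal (v - 1) * Uᵀ) := by
  have hU' : U * Uᵀ = 1 := mul_eq_one_comm.1 hU
  have hdiag : diagonal v⁻¹ * diagonal (v - 1) = 1 - diagonal v⁻¹ := by
    rw [diagonal_mul_diagonal, ← diagonal_one, diagonal_sub]
    congr 1 with i
    simp [mul_sub, inv_mul_cancel₀ (hv i)]
  calc X - X * U * diagonal v⁻¹ * Uᵀ = X * U * (1 - diagonal v⁻¹) * Uᵀ := by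
        rw [Matrix.mul_sub, Matrix.sub_mul, Matrix.mul_one, Matrix.mul_assoc X U Uᵀ, hU',
          Matrix.mul_one]
    _ = _ := by
      rw [← hdiag]
      simp only [Matrix.mul_assoc]
      rw [← Matrix.mul_assoc Uᵀ U, hU, Matrix.one_mul]

lemma l2_opNorm_sub_mul_conj_diagonal_inv_sqrt_le [Fintype m] (X : Matrix m n ℝ)
    {U : Matrix n n ℝ} (hU : Uᵀ * U = 1) {v : n → ℝ} (hv : ∀ i, 0 < v i) :
    ‖X - X * U * diagonal (fun i => (√(v i))⁻¹) * Uᵀ‖ ≤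
      ‖X * U * diagonal (fun i => (√(v i))⁻¹) * Uᵀ‖ * ‖v - 1‖ := by
  rw [show (fun i => (√(v i))⁻¹) = (fun i => √(v i))⁻¹ from rfl,
    sub_mul_conj_diagonal_inv X hU fun i => (Real.sqrt_pos.2 (hv i)).ne']
  refine (l2_opNorm_mul _ _).trans (mul_le_mul_of_nonneg_left ?_ (norm_nonneg _))
  rw [l2_opNorm_conj_orthogonal hU, l2_opNorm_diagonal]
  exact pi_norm_sqrt_sub_one_le fun i => (hv i).le

lemma norm_sub_one_le_of_transpose_mul_mul_eq [Fintype m] [DecidableEq m] {X : Matrix m n ℝ}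
    {A B : Matrix m m ℝ} {U : Matrix n n ℝ} {v : n → ℝ} (hU : Uᵀ * U = 1)
    (hB : Xᵀ * B * X = 1) (hA : Xᵀ * A * X = U * diagonal v * Uᵀ) :
    ‖v - 1‖ ≤ ‖X‖ ^ 2 * ‖A - B‖ := calc
  ‖v - 1‖ = ‖U * (diagonal v - 1) * Uᵀ‖ := by
    rw [l2_opNorm_conj_orthogonal hU, l2_opNorm_diagonal_sub_one]
  _ = ‖Xᵀ * (A - B) * X‖ := by
    rw [Matrix.mul_sub, Matrix.sub_mul, ← hA, Matrix.mul_one, mul_eq_one_comm.1 hU, ← hB,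
      Matrix.mul_sub, Matrix.sub_mul]
  _ ≤ ‖X‖ ^ 2 * ‖A - B‖ := l2_opNorm_transpose_mul_mul_le _ _

end Matrix


lemma OrthonormalBasis.finrank_span_image {ι 𝕜 E : Type*} [RCLike 𝕜] [NormedAddCommGroup E]
    [InnerProductSpace 𝕜 E] [Fintype ι] (b : OrthonormalBasis ι 𝕜 E) (J : Finset ι) :
    finrank 𝕜 (span 𝕜 (b '' J)) = J.card := by
  classical
  have hb := b.orthonormal.linearIndependent
  rw [← Finset.coe_image, finrank_span_finset_eq_card,
    Finset.card_image_of_injective _ hb.injective]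
  rw [Finset.coe_image]
  exact (hb.linearIndepOn _).id_image

lemma OrthonormalBasis.inner_eq_zero_of_mem_span {ι 𝕜 E : Type*} [RCLike 𝕜] [NormedAddCommGroup E]
    [InnerProductSpace 𝕜 E] [Fintype ι] (b : OrthonormalBasis ι 𝕜 E) {J : Set ι} {x : E}
    (hx : x ∈ span 𝕜 (b '' J)) {i : ι} (hi : i ∉ J) : inner 𝕜 (b i) x = 0 := by
  induction hx using span_induction with
  | mem z hz =>
      obtain ⟨j, hj, rfl⟩ := hz
      exact b.orthonormal.2 (fun h => hi (h ▸ hj))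
  | zero => simp
  | add z w _ _ hz hw => rw [inner_add_right, hz, hw, add_zero]
  | smul a z _ hz => rw [inner_smul_right, hz, mul_zero]

lemma Submodule.exists_mem_mem_ne_zero_of_finrank_lt_add {K V : Type*} [DivisionRing K]
    [AddCommGroup V] [Module K V] [FiniteDimensional K V] {s t : Submodule K V}
    (h : finrank K V < finrank K s + finrank K t) : ∃ x ∈ s, x ∈ t ∧ x ≠ 0 := by
  by_contra! hst
  exact h.not_ge (finrank_add_finrank_le_of_disjoint (disjoint_def.2 hst))

namespace LinearMap.IsSymmetric

variable {E : Type*} [NormedAddCommGroup E] [InnerProductSpace ℝ E] [FiniteDimensional ℝ E]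
  {T : E →ₗ[ℝ] E} {n : ℕ} (hT : T.IsSymmetric) (hn : finrank ℝ E = n)

lemma inner_apply_self_eq_sum (x : E) :
    ⟪T x, x⟫ = ∑ i, hT.eigenvalues hn i * ⟪hT.eigenvectorBasis hn i, x⟫ ^ 2 := by
  rw [← (hT.eigenvectorBasis hn).repr.inner_map_map, PiLp.inner_apply]
  congr 1 with i
  rw [eigenvectorBasis_apply_self_apply]
  simp [OrthonormalBasis.repr_apply_apply]
  ring

lemma inner_apply_self_le_of_mem_span {J : Set (Fin n)} {c : ℝ}
    (hc : ∀ j ∈ J, hT.eigenvalues hn j ≤ c) {x : E}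
    (hx : x ∈ span ℝ (hT.eigenvectorBasis hn '' J)) : ⟪T x, x⟫ ≤ c * ‖x‖ ^ 2 := by
  rw [hT.inner_apply_self_eq_sum hn, ← (hT.eigenvectorBasis hn).sum_sq_inner_right, Finset.mul_sum]
  refine Finset.sum_le_sum fun i _ => ?_
  by_cases hi : i ∈ J
  · exact mul_le_mul_of_nonneg_right (hc i hi) (sq_nonneg _)
  · simp [OrthonormalBasis.inner_eq_zero_of_mem_span _ hx hi]

lemma le_inner_apply_self_of_mem_span {J : Set (Fin n)} {c : ℝ}
    (hc : ∀ j ∈ J, c ≤ hT.eigenvalues hn j) {x : E}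
    (hx : x ∈ span ℝ (hT.eigenvectorBasis hn '' J)) : c * ‖x‖ ^ 2 ≤ ⟪T x, x⟫ := by
  rw [hT.inner_apply_self_eq_sum hn, ← (hT.eigenvectorBasis hn).sum_sq_inner_right, Finset.mul_sum]
  refine Finset.sum_le_sum fun i _ => ?_
  by_cases hi : i ∈ J
  · exact mul_le_mul_of_nonneg_right (hc i hi) (sq_nonneg _)
  · simp [OrthonormalBasis.inner_eq_zero_of_mem_span _ hx hi]

/-- A Courant–Fischer dimension count: the eigenvectors of `T` for its `i + 1` largest
eigenvalues and those of `S` for its `n - i` smallest span subspaces that meet. -/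
theorem eigenvalues_le_add_of_inner_le {S : E →ₗ[ℝ] E} (hS : S.IsSymmetric) {c : ℝ}
    (h : ∀ x, ⟪T x, x⟫ ≤ ⟪S x, x⟫ + c * ‖x‖ ^ 2) (i : Fin n) :
    hT.eigenvalues hn i ≤ hS.eigenvalues hn i + c := by
  set V := span ℝ (hT.eigenvectorBasis hn '' ↑(Finset.Iic i))
  set W := span ℝ (hS.eigenvectorBasis hn '' ↑(Finset.Ici i))
  obtain ⟨x, hxV, hxW, hx⟩ : ∃ x ∈ V, x ∈ W ∧ x ≠ 0 := by
    apply exists_mem_mem_ne_zero_of_finrank_lt_add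
    rw [OrthonormalBasis.finrank_span_image, OrthonormalBasis.finrank_span_image, Fin.card_Iic,
      Fin.card_Ici]
    omega
  have hTx := hT.le_inner_apply_self_of_mem_span hn
    (fun j hj => hT.eigenvalues_antitone hn (Finset.mem_Iic.1 hj)) hxV
  have hSx := hS.inner_apply_self_le_of_mem_span hn
    (fun j hj => hS.eigenvalues_antitone hn (Finset.mem_Ici.1 hj)) hxW
  have hx2 : 0 < ‖x‖ ^ 2 := by positivity
  nlinarith [h x]

end LinearMap.IsSymmetric

lemma LinearMap.IsSymmetric.eigenvalues_cast {𝕜 E : Type*} [RCLike 𝕜] [NormedAddCommGroup E]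
    [InnerProductSpace 𝕜 E] [FiniteDimensional 𝕜 E] {T : E →ₗ[𝕜] E} (hT : T.IsSymmetric)
    {n m : ℕ} (hn : finrank 𝕜 E = n) (h : n = m) (i : Fin n) :
    hT.eigenvalues (hn.trans h) (Fin.cast h i) = hT.eigenvalues hn i := by
  subst h; rfl

lemma eigVals_of_isHermitian {d : ℕ} {A : Matrix (Fin d) (Fin d) ℝ} (hA : A.IsHermitian) :
    eigVals A = hA.eigenvalues :=
  dif_pos hA

-- Mathlib's `IsHermitian.eigenvalues` are the sorted eigenvalues of `toEuclideanLin A`,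
-- reindexed along an arbitrary equivalence `Fin (Fintype.card (Fin d)) ≃ Fin d`.
lemma exists_perm_eigVals_comp_eq {d : ℕ} {A : Matrix (Fin d) (Fin d) ℝ} (hA : A.IsHermitian) :
    ∃ π : Equiv.Perm (Fin d), eigVals A ∘ π =
      (isSymmetric_toEuclideanLin_iff.mpr hA).eigenvalues finrank_euclideanSpace_fin := by
  refine ⟨(finCongr (Fintype.card_fin d).symm).trans
    (Fintype.equivOfCardEq (Fintype.card_fin _)), funext fun i => ?_⟩
  simp only [Function.comp_apply, eigVals_of_isHermitian hA, IsHermitian.eigenvalues,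
    Equiv.trans_apply, Equiv.symm_apply_apply, finCongr_apply, IsHermitian.eigenvalues₀]
  exact LinearMap.IsSymmetric.eigenvalues_cast _ _ _ _

lemma sval_eq_eigenvalues {d : ℕ} {A : Matrix (Fin d) (Fin d) ℝ} (hA : A.IsHermitian) (j : Fin d) :
    sval A j =
      (isSymmetric_toEuclideanLin_iff.mpr hA).eigenvalues finrank_euclideanSpace_fin j := by
  obtain ⟨π, hπ⟩ := exists_perm_eigVals_comp_eq hA
  have hsorted : eigVals A ∘ Tuple.sort (eigVals A) = eigVals A ∘ (Fin.revPerm.trans π) := by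
    refine Tuple.unique_monotone (Tuple.monotone_sort _) ?_
    rw [Equiv.coe_trans, ← Function.comp_assoc, hπ]
    exact (LinearMap.IsSymmetric.eigenvalues_antitone _ _).comp Fin.rev_anti
  rw [← hπ, sval, hsorted]
  simp

lemma sval_pos_iff {d : ℕ} {A : Matrix (Fin d) (Fin d) ℝ} (hA : A.PosSemidef) (j : Fin d) :
    0 < sval A j ↔ (j : ℕ) < A.rank := by
  rw [sval_eq_eigenvalues hA.1, ← Tuple.lt_card_gt_iff_apply_gt_of_antitone
    (LinearMap.IsSymmetric.eigenvalues_antitone _ _), hA.1.rank_eq_card_non_zero_eigs]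
  obtain ⟨π, hπ⟩ := exists_perm_eigVals_comp_eq hA.1
  rw [← hπ, Fintype.card_subtype]
  refine Iff.of_eq (congrArg _ (Finset.card_equiv π (fun i => ?_)))
  simp [eigVals_of_isHermitian hA.1, (hA.eigenvalues_nonneg (π i)).lt_iff_ne']

lemma sval_le_sval_add_norm_sub {d : ℕ} {A B : Matrix (Fin d) (Fin d) ℝ} (hA : A.IsHermitian)
    (hB : B.IsHermitian) (j : Fin d) : sval A j ≤ sval B j + ‖A - B‖ := by
  rw [sval_eq_eigenvalues hA, sval_eq_eigenvalues hB]
  refine LinearMap.IsSymmetric.eigenvalues_le_add_of_inner_le _ _ _ (fun x => ?_) j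
  have hx : ⟪toEuclideanLin (A - B) x, x⟫ ≤ ‖A - B‖ * ‖x‖ ^ 2 := calc
    _ ≤ ‖toEuclideanLin (A - B) x‖ * ‖x‖ := real_inner_le_norm _ _
    _ ≤ ‖A - B‖ * ‖x‖ * ‖x‖ := mul_le_mul_of_nonneg_right
      (((toEuclideanLin.trans LinearMap.toContinuousLinearMap) (A - B)).le_opNorm x) (norm_nonneg _)
    _ = ‖A - B‖ * ‖x‖ ^ 2 := by ring
  rw [map_sub, LinearMap.sub_apply, inner_sub_left] at hx
  linarith

/-- Under the hypotheses of the whitening perturbation lemma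
(`ε̃ := ‖Â − A‖_op/σ_k(A) < 1/3`, `Ŵ` whitens `Â`, `W = Ŵ U D^{−1/2} U^T` whitens `A`),
the whitening matrices satisfy `‖Ŵ − W‖_op ≤ ‖W‖_op · ε̃/(1 − ε̃)`. -/
theorem whitening_matrix_perturbation {d k : ℕ} (hk : 0 < k) (hkd : k ≤ d)
    (A Ahat : Matrix (Fin d) (Fin d) ℝ) (What : Matrix (Fin d) (Fin k) ℝ)
    (U : Matrix (Fin k) (Fin k) ℝ) (dvec : Fin k → ℝ)
    (hA : A.PosSemidef) (hrank : A.rank = k) (hAhat : Ahat.PosSemidef)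
    (σk εt : ℝ)
    (hσk : σk = sval A ⟨k - 1, by omega⟩)
    (hεt : εt = opNorm (Ahat - A) / σk)
    (hεlt : εt < 1 / 3)
    (hwhiten : Whatᵀ * Ahat * What = 1)
    (hWnorm : opNorm What = (Real.sqrt (sval Ahat ⟨k - 1, by omega⟩))⁻¹)
    (hU : Uᵀ * U = 1)
    (hdecomp : Whatᵀ * A * What = U * Matrix.diagonal dvec * Uᵀ)
    (W : Matrix (Fin d) (Fin k) ℝ)
    (hW : W = What * U * Matrix.diagonal (fun i => (Real.sqrt (dvec i))⁻¹) * Uᵀ) :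
    opNorm (What - W) ≤ opNorm W * (εt / (1 - εt)) := by
  set σh := sval Ahat ⟨k - 1, by omega⟩
  have hσ : 0 < σk := hσk ▸ (sval_pos_iff hA _).2 (by simp only [hrank]; omega)
  have hΔ : ‖A - Ahat‖ = εt * σk := by
    rw [hεt, norm_sub_rev, div_mul_cancel₀ _ hσ.ne']; rfl
  have hε : 0 ≤ εt := hεt ▸ div_nonneg (norm_nonneg _) hσ.le
  have hσh : (1 - εt) * σk ≤ σh := by
    have := sval_le_sval_add_norm_sub hA.1 hAhat.1 ⟨k - 1, by omega⟩
    rw [← hσk, hΔ] at this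
    linarith
  have hσh_pos : 0 < σh := lt_of_lt_of_le (by nlinarith) hσh
  have hWhat : ‖What‖ ^ 2 = σh⁻¹ := by
    rw [show ‖What‖ = opNorm What from rfl, hWnorm, inv_pow, Real.sq_sqrt hσh_pos.le]
  have hd : ‖dvec - 1‖ ≤ εt / (1 - εt) := by
    refine (norm_sub_one_le_of_transpose_mul_mul_eq hU hwhiten hdecomp).trans ?_
    rw [hWhat, hΔ, ← div_eq_inv_mul, div_le_div_iff₀ hσh_pos (by linarith)]
    nlinarith
  have hd_pos : ∀ i, 0 < dvec i :=
    pos_of_norm_sub_one_lt_one (hd.trans_lt (by rw [div_lt_one (by linarith)]; linarith))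
  rw [hW]
  exact (l2_opNorm_sub_mul_conj_diagonal_inv_sqrt_le What hU hd_pos).trans
    (mul_le_mul_of_nonneg_left hd (norm_nonneg _))
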